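/- Let γ > 0, c ∈ ℝ^d with c ≠ 0, and let f : ℝ^d → ℝ be twice continuously differentiable on a neighborhood of ω* ∈ ℝ^d with f(ω*) = 0, ∇f(ω*) ≠ 0, and c = μ·∇f(ω*) for some μ > 0. On the neighborhood of ω* where ‖∇f(ω)‖² − 2γf(ω) > 0, define F(ω) = ω + (1/γ)·[ (√(‖∇f(ω)‖² − 2γf(ω)) / ‖c‖)·c − ∇f(ω) ]. Then F is differentiable at ω*, and its derivative at ω* is the linear map J = (I − u·uᵀ)∘(I − (1/γ)·∇²f(ω*)), where u = ∇f(ω*)/‖∇f(ω*)‖ and ∇²f(ω*) is the Hessian of f at ω*; that is, J·p = w − ⟨u,w⟩·u with w = p − (1/γ)·∇²f(ω*)·p. -/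

import Mathlib

/-!
At `ω*` the radicand equals `‖∇f(ω*)‖²`, so the square-root term is differentiable there with
derivative `p ↦ ⟪u, (∇²f(ω*) - γ I) p⟫`, and `c / ‖c‖ = u` because `μ > 0`. The chain rule gives
`DF(ω*) p = p + γ⁻¹ (⟪u, (∇²f(ω*) - γ I) p⟫ u - ∇²f(ω*) p)`, which is
`(I - u uᵀ)(I - ∇²f(ω*)/γ) p`.
-/

open scoped RealInnerProductSpace

open InnerProductSpace ContinuousLinearMap

section Normed

variable {E : Type*} [NormedAddCommGroup E] [NormedSpace ℝ E]

theorem inv_norm_smul_pos_smul {a : E} {μ : ℝ} (hμ : 0 < μ) (ha : a ≠ 0) :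
    ‖μ • a‖⁻¹ • (μ • a) = ‖a‖⁻¹ • a :=
  (SameRay.sameRay_pos_smul_left a hμ).inv_norm_smul_eq (smul_ne_zero hμ.ne' ha) ha

end Normed

section InnerProduct

variable {E : Type*} [NormedAddCommGroup E] [InnerProductSpace ℝ E] [CompleteSpace E]

theorem ContDiffAt.gradient {f : E → ℝ} {x : E} {m n : WithTop ℕ∞} (hf : ContDiffAt ℝ n f x)
    (hmn : m + 1 ≤ n) : ContDiffAt ℝ m (gradient f) x :=
  (toDual ℝ E).symm.contDiff.contDiffAt.comp x (hf.fderiv_right hmn)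

theorem hasFDerivAt_sqrt_norm_gradient_sq_sub {f : E → ℝ} {x : E} {G : E →L[ℝ] E}
    (hf : DifferentiableAt ℝ f x) (hG : HasFDerivAt (gradient f) G x) (hx : f x = 0)
    (hgx : gradient f x ≠ 0) (γ : ℝ) :
    HasFDerivAt (fun ω => √(‖gradient f ω‖ ^ 2 - 2 * γ * f ω))
      ((innerSL ℝ (‖gradient f x‖⁻¹ • gradient f x)).comp (G - γ • 1)) x := by
  set a := gradient f x
  have ha : 0 < ‖a‖ := norm_pos_iff.mpr hgx
  have hf' : HasFDerivAt f (toDual ℝ E a) x := by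
    simpa only [a, toDual_gradient] using hf.hasFDerivAt
  have hnormsq :
      HasFDerivAt (fun ω => ‖gradient f ω‖ ^ 2) (fderivInnerCLM ℝ (a, a) ∘L G.prod G) x := by
    simpa only [real_inner_self_eq_norm_sq] using hG.inner ℝ hG
  have hφ : HasFDerivAt (fun ω => ‖gradient f ω‖ ^ 2 - 2 * γ * f ω)
      (fderivInnerCLM ℝ (a, a) ∘L G.prod G - (2 * γ) • toDual ℝ E a) x :=
    hnormsq.sub (hf'.const_mul (2 * γ))
  have hφx : ‖gradient f x‖ ^ 2 - 2 * γ * f x = ‖a‖ ^ 2 := by rw [hx, mul_zero, sub_zero]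
  have h := (Real.hasDerivAt_sqrt (by rw [hφx]; positivity)).comp_hasFDerivAt x hφ
  refine h.congr_fderiv (ext fun p => ?_)
  simp only [hφx, Real.sqrt_sq ha.le, smul_apply, sub_apply, comp_apply, prod_apply,
    fderivInnerCLM_apply, toDual_apply_apply, innerSL_apply_apply, one_apply_eq_self, smul_eq_mul,
    inner_sub_right, real_inner_smul_left, real_inner_smul_right, real_inner_comm a]
  field_simp
  ring

noncomputable def supportIterationMap (f : E → ℝ) (γ : ℝ) (c ω : E) : E :=
  ω + (1 / γ) • ((√(‖gradient f ω‖ ^ 2 - 2 * γ * f ω) / ‖c‖) • c - gradient f ω)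

theorem hasFDerivAt_supportIterationMap {f : E → ℝ} {x : E} {G : E →L[ℝ] E} {γ μ : ℝ}
    (hγ : γ ≠ 0) (hμ : 0 < μ) (hf : DifferentiableAt ℝ f x) (hG : HasFDerivAt (gradient f) G x)
    (hx : f x = 0) (hgx : gradient f x ≠ 0) :
    HasFDerivAt (supportIterationMap f γ (μ • gradient f x))
      ((1 - (innerSL ℝ (‖gradient f x‖⁻¹ • gradient f x)).smulRight
          (‖gradient f x‖⁻¹ • gradient f x)) ∘L (1 - γ⁻¹ • G)) x := by
  have hsqrt := hasFDerivAt_sqrt_norm_gradient_sq_sub hf hG hx hgx γ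
  set u := ‖gradient f x‖⁻¹ • gradient f x
  have h := (hasFDerivAt_id x).add
    (((hsqrt.smul_const u).sub hG).const_smul (1 / γ))
  refine (h.congr_fderiv (ext fun p => ?_)).congr_of_eventuallyEq
    (Filter.Eventually.of_forall fun ω => ?_)
  · simp only [add_apply, id_apply, smul_apply, sub_apply, comp_apply, smulRight_apply,
      innerSL_apply_apply, one_apply_eq_self, inner_sub_right, inner_smul_right]
    match_scalars <;> field_simp
    ring
  · simp only [supportIterationMap, div_eq_mul_inv, mul_smul, inv_norm_smul_pos_smul hμ hgx, u,
      Pi.add_apply, Pi.smul_apply, Pi.sub_apply, id]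

end InnerProduct

theorem stmt_10 {d : ℕ} (γ : ℝ) (hγ : 0 < γ)
    (c : EuclideanSpace ℝ (Fin d))
    (f : EuclideanSpace ℝ (Fin d) → ℝ) (ωs : EuclideanSpace ℝ (Fin d))
    (hf : ∃ U ∈ nhds ωs, ContDiffOn ℝ 2 f U)
    (h0 : f ωs = 0) (hg : gradient f ωs ≠ 0)
    (μ : ℝ) (hμ : 0 < μ) (hcμ : c = μ • gradient f ωs)
    (F : EuclideanSpace ℝ (Fin d) → EuclideanSpace ℝ (Fin d))
    (U : Set (EuclideanSpace ℝ (Fin d))) (hU : U ∈ nhds ωs)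
    (hF : ∀ ω ∈ U, F ω = ω + (1 / γ) •
      ((Real.sqrt (‖gradient f ω‖ ^ 2 - 2 * γ * f ω) / ‖c‖) • c - gradient f ω)) :
    DifferentiableAt ℝ F ωs ∧
    ∀ p : EuclideanSpace ℝ (Fin d),
      fderiv ℝ F ωs p =
        (p - (1 / γ) • fderiv ℝ (gradient f) ωs p) -
          ⟪‖gradient f ωs‖⁻¹ • gradient f ωs,
              p - (1 / γ) • fderiv ℝ (gradient f) ωs p⟫ •
            (‖gradient f ωs‖⁻¹ • gradient f ωs) := by
  obtain ⟨V, hV, hfV⟩ := hf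
  have hf2 : ContDiffAt ℝ 2 f ωs := hfV.contDiffAt hV
  have hG : HasFDerivAt (gradient f) (fderiv ℝ (gradient f) ωs) ωs :=
    ((hf2.gradient (m := 1) le_rfl).differentiableAt one_ne_zero).hasFDerivAt
  have hFeq : F =ᶠ[nhds ωs] supportIterationMap f γ c :=
    Filter.eventually_of_mem hU fun ω hω => by rw [hF ω hω, supportIterationMap]
  subst hcμ
  have hJ := (hasFDerivAt_supportIterationMap hγ.ne' hμ (hf2.differentiableAt two_ne_zero) hG
    h0 hg).congr_of_eventuallyEq hFeq
  refine ⟨hJ.differentiableAt, fun p => ?_⟩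
  simp only [hJ.fderiv, comp_apply, sub_apply, one_apply_eq_self, smulRight_apply,
    innerSL_apply_apply, smul_apply, one_div]
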